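/- arXiv:2110.01971 — 2 statements merged into one kernel-verified Lean document; each statement's English description precedes it below -/
import Mathlib

section
/- Let (g,h,φ) be a morphism Lie algebra with representation (V,W,ψ). Given 2-cocycles (θ,γ,η) and (θ',γ',η') that differ by a simple coboundary δ(d₀,δ₀,0) for some (d₀,δ₀,0) ∈ Hom(g,V) ⊕ Hom(h,W) ⊕ 0, the abelian extensions (ĝ,ĥ,φ̂) and (ĝ',ĥ',φ̂') constructed from them are isomorphic via α(x,v) = (x, v + d₀(x)) and β(h,w) = (h, w + δ₀(h)); in particular α, β are Lie algebra isomorphisms and φ̂'∘α = β∘φ̂. -/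
attribute [local instance 100] LieRing.ofAssociativeRing

/-- The Chevalley–Eilenberg differential (on plain cochains), for a bracket `br` on `L`
and an action `ρ` of `L` on `M`:
`(δf)(x₁,…,x_{n+1}) = Σᵢ (-1)^{i+1} ρ(xᵢ) f(…,x̂ᵢ,…) + Σ_{i<j} (-1)^{i+j} f([xᵢ,xⱼ],…,x̂ᵢ,…,x̂ⱼ,…)`. -/
def ceD {L M : Type*} [AddCommGroup M] (br : L → L → L) (ρ : L → M → M)
    {n : ℕ} (f : (Fin n → L) → M) : (Fin (n + 1) → L) → M :=
  fun x =>
    (∑ i : Fin (n + 1), ((-1 : ℤ) ^ (i : ℕ)) • ρ (x i) (f (x ∘ i.succAbove)))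
      + ∑ i : Fin (n + 1), ∑ j : Fin (n + 1),
          if h : (i : ℕ) < (j : ℕ) then
            ((-1 : ℤ) ^ ((i : ℕ) + (j : ℕ))) • f (fun t : Fin n =>
              Fin.cons (α := fun _ => L) (br (x i) (x j))
                (fun s : Fin (n - 1) =>
                  x (j.succAbove (Fin.cast (by have := j.isLt; omega)
                    (Fin.succAbove ⟨(i : ℕ), by have := j.isLt; omega⟩ s))))
                (Fin.cast (by have := j.isLt; omega) t))
          else 0

/-- The bracket on `ĝ = g ⊕ V` determined by a 2-cochain `θ`. -/
def extBracket {k g V : Type*} [CommRing k] [LieRing g] [LieAlgebra k g]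
    [AddCommGroup V] [Module k V] (ρV : g →ₗ⁅k⁆ Module.End k V)
    (θ : AlternatingMap k g V (Fin 2)) (a b : g × V) : g × V :=
  (⁅a.1, b.1⁆, ρV a.1 b.2 - ρV b.1 a.2 + θ ![a.1, b.1])

/-- The map `φ̂ : ĝ → ĥ`, `φ̂(x,v) = (φ x, ψ v + η x)`. -/
def extHom {k g h V W : Type*} [CommRing k] [LieRing g] [LieAlgebra k g]
    [LieRing h] [LieAlgebra k h] [AddCommGroup V] [Module k V]
    [AddCommGroup W] [Module k W]
    (φ : g →ₗ⁅k⁆ h) (ψ : V →ₗ[k] W) (η : g →ₗ[k] W) (a : g × V) : h × W :=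
  (φ a.1, ψ a.2 + η a.1)

/-! Shearing `g ⊕ V` by `d₀` changes the `V`-component of the bracket of `(x,v)` and `(x',v')` by
`ρ(x) d₀ x' − ρ(x') d₀ x − d₀ [x,x'] = (δ d₀)(x,x')`, which is exactly `θ − θ'`; the same holds for
`h ⊕ W` and `δ₀`, and the components of `φ̂' ∘ α` and `β ∘ φ̂` differ by `η' − η + ψ ∘ d₀ − δ₀ ∘ φ = 0`. -/

theorem ceD_one_apply {L M : Type*} [AddCommGroup M] (br : L → L → L) (ρ : L → M → M)
    (f : L → M) (x : Fin 2 → L) :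
    ceD br ρ (fun t : Fin 1 → L => f (t 0)) x
      = ρ (x 0) (f (x 1)) - ρ (x 1) (f (x 0)) - f (br (x 0) (x 1)) := by
  simp only [ceD, Fin.sum_univ_two, Fin.succAbove, Function.comp_apply, Fin.isValue,
    Fin.castSucc_zero, Fin.succ_zero_eq_one, Fin.coe_ofNat_eq_mod, Nat.zero_mod, Nat.mod_succ,
    pow_zero, pow_one, one_smul, neg_smul, lt_self_iff_false, zero_lt_one, not_lt_zero,
    Fin.val_fin_lt, Fin.lt_one_iff, ↓reduceIte, dite_eq_ite, Nat.add_one_sub_one, Fin.cast_eq_self,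
    Fin.cons_zero, Finset.sum_ite_eq', Finset.mem_univ, Nat.reduceAdd, Int.reduceNeg, zero_add]
  abel_nf

theorem bijective_prod_shear {α V : Type*} [AddGroup V] (d : α → V) :
    Function.Bijective (fun a : α × V => (a.1, a.2 + d a.1)) :=
  (Equiv.prodShear (Equiv.refl α) fun x => Equiv.addRight (d x)).bijective

theorem extBracket_shear_of_eq_sub_ceD {k g V : Type*} [CommRing k] [LieRing g]
    [LieAlgebra k g] [AddCommGroup V] [Module k V] (ρV : g →ₗ⁅k⁆ Module.End k V)
    {θ θ' : AlternatingMap k g V (Fin 2)} {d₀ : g →ₗ[k] V}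
    (hd : ⇑θ' = ⇑θ - ceD (fun a b : g => ⁅a, b⁆) (fun x u => ρV x u)
        (fun t : Fin 1 → g => d₀ (t 0)))
    (a b : g × V) :
    ((extBracket ρV θ a b).1, (extBracket ρV θ a b).2 + d₀ (extBracket ρV θ a b).1) =
      extBracket ρV θ' (a.1, a.2 + d₀ a.1) (b.1, b.2 + d₀ b.1) := by
  have hθ' : θ' ![a.1, b.1] =
      θ ![a.1, b.1] - (ρV a.1 (d₀ b.1) - ρV b.1 (d₀ a.1) - d₀ ⁅a.1, b.1⁆) := by
    rw [hd, Pi.sub_apply, ceD_one_apply]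
    rfl
  simp only [extBracket, hθ', map_add]
  abel_nf

theorem statement15_general {k g h V W : Type*} [CommRing k]
    [LieRing g] [LieAlgebra k g] [LieRing h] [LieAlgebra k h]
    [AddCommGroup V] [Module k V] [AddCommGroup W] [Module k W]
    (φ : g →ₗ⁅k⁆ h) (ρV : g →ₗ⁅k⁆ Module.End k V) (ρW : h →ₗ⁅k⁆ Module.End k W)
    (ψ : V →ₗ[k] W)
    (θ θ' : AlternatingMap k g V (Fin 2)) (γ γ' : AlternatingMap k h W (Fin 2))
    (η η' : g →ₗ[k] W) (d₀ : g →ₗ[k] V) (δ₀ : h →ₗ[k] W)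
    -- they differ by the simple coboundary δ(d₀, δ₀, 0):
    (hd : ⇑θ' = ⇑θ - ceD (fun a b : g => ⁅a, b⁆) (fun x u => ρV x u)
        (fun t : Fin 1 → g => d₀ (t 0)))
    (hδ : ⇑γ' = ⇑γ - ceD (fun a b : h => ⁅a, b⁆) (fun z w => ρW z w)
        (fun t : Fin 1 → h => δ₀ (t 0)))
    (he : ∀ x : g, η' x = η x - (ψ (d₀ x) - δ₀ (φ x))) :
    -- the isomorphism (α, β):
    Function.Bijective (fun a : g × V => (a.1, a.2 + d₀ a.1)) ∧
    Function.Bijective (fun a : h × W => (a.1, a.2 + δ₀ a.1)) ∧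
    (∀ a b : g × V,
      (fun c : g × V => (c.1, c.2 + d₀ c.1)) (extBracket ρV θ a b) =
        extBracket ρV θ'
          ((fun c : g × V => (c.1, c.2 + d₀ c.1)) a)
          ((fun c : g × V => (c.1, c.2 + d₀ c.1)) b)) ∧
    (∀ a b : h × W,
      (fun c : h × W => (c.1, c.2 + δ₀ c.1)) (extBracket ρW γ a b) =
        extBracket ρW γ'
          ((fun c : h × W => (c.1, c.2 + δ₀ c.1)) a)
          ((fun c : h × W => (c.1, c.2 + δ₀ c.1)) b)) ∧
    (∀ a : g × V,
      extHom φ ψ η' ((fun c : g × V => (c.1, c.2 + d₀ c.1)) a) =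
        (fun c : h × W => (c.1, c.2 + δ₀ c.1)) (extHom φ ψ η a)) := by
  refine ⟨bijective_prod_shear d₀, bijective_prod_shear δ₀,
    extBracket_shear_of_eq_sub_ceD ρV hd, extBracket_shear_of_eq_sub_ceD ρW hδ, fun a => ?_⟩
  simp only [extHom, he, map_add]
  exact Prod.ext rfl (by abel_nf)

/-- Let `(g,h,φ)` be a morphism Lie algebra with representation `(V,W,ψ)`.
Given 2-cocycles `(θ,γ,η)` and `(θ',γ',η')` differing by a simple coboundary
`δ(d₀,δ₀,0)` (i.e. `θ' = θ − δ'(d₀)`, `γ' = γ − δ''(δ₀)`, `η' = η − (ψ∘d₀ − δ₀∘φ)`),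
the abelian extensions `(ĝ,ĥ,φ̂)` and `(ĝ',ĥ',φ̂')` constructed from them are
isomorphic via `α(x,v) = (x, v + d₀ x)` and `β(z,w) = (z, w + δ₀ z)`: `α`, `β` are
bijections intertwining the brackets and `φ̂' ∘ α = β ∘ φ̂`. -/
theorem statement15 {k g h V W : Type*} [CommRing k]
    [LieRing g] [LieAlgebra k g] [LieRing h] [LieAlgebra k h]
    [AddCommGroup V] [Module k V] [AddCommGroup W] [Module k W]
    (φ : g →ₗ⁅k⁆ h) (ρV : g →ₗ⁅k⁆ Module.End k V) (ρW : h →ₗ⁅k⁆ Module.End k W)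
    (ψ : V →ₗ[k] W)
    (hψ : ∀ (x : g) (v : V), ψ (ρV x v) = ρW (φ x) (ψ v))
    (θ θ' : AlternatingMap k g V (Fin 2)) (γ γ' : AlternatingMap k h W (Fin 2))
    (η η' : g →ₗ[k] W) (d₀ : g →ₗ[k] V) (δ₀ : h →ₗ[k] W)
    -- (θ,γ,η) and (θ',γ',η') are 2-cocycles:
    (hθ : ceD (fun a b : g => ⁅a, b⁆) (fun x u => ρV x u) (⇑θ) = 0)
    (hγ : ceD (fun a b : h => ⁅a, b⁆) (fun z w => ρW z w) (⇑γ) = 0)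
    (hη : (fun y : Fin 2 → g =>
        ψ (θ y) - γ (fun i => φ (y i))
          - ceD (fun a b : g => ⁅a, b⁆) (fun x w => ρW (φ x) w)
              (fun t : Fin 1 → g => η (t 0)) y) = 0)
    (hθ' : ceD (fun a b : g => ⁅a, b⁆) (fun x u => ρV x u) (⇑θ') = 0)
    (hγ' : ceD (fun a b : h => ⁅a, b⁆) (fun z w => ρW z w) (⇑γ') = 0)
    (hη' : (fun y : Fin 2 → g =>
        ψ (θ' y) - γ' (fun i => φ (y i))
          - ceD (fun a b : g => ⁅a, b⁆) (fun x w => ρW (φ x) w)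
              (fun t : Fin 1 → g => η' (t 0)) y) = 0)
    -- they differ by the simple coboundary δ(d₀, δ₀, 0):
    (hd : ⇑θ' = ⇑θ - ceD (fun a b : g => ⁅a, b⁆) (fun x u => ρV x u)
        (fun t : Fin 1 → g => d₀ (t 0)))
    (hδ : ⇑γ' = ⇑γ - ceD (fun a b : h => ⁅a, b⁆) (fun z w => ρW z w)
        (fun t : Fin 1 → h => δ₀ (t 0)))
    (he : ∀ x : g, η' x = η x - (ψ (d₀ x) - δ₀ (φ x))) :
    -- the isomorphism (α, β):
    Function.Bijective (fun a : g × V => (a.1, a.2 + d₀ a.1)) ∧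
    Function.Bijective (fun a : h × W => (a.1, a.2 + δ₀ a.1)) ∧
    (∀ a b : g × V,
      (fun c : g × V => (c.1, c.2 + d₀ c.1)) (extBracket ρV θ a b) =
        extBracket ρV θ'
          ((fun c : g × V => (c.1, c.2 + d₀ c.1)) a)
          ((fun c : g × V => (c.1, c.2 + d₀ c.1)) b)) ∧
    (∀ a b : h × W,
      (fun c : h × W => (c.1, c.2 + δ₀ c.1)) (extBracket ρW γ a b) =
        extBracket ρW γ'
          ((fun c : h × W => (c.1, c.2 + δ₀ c.1)) a)
          ((fun c : h × W => (c.1, c.2 + δ₀ c.1)) b)) ∧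
    (∀ a : g × V,
      extHom φ ψ η' ((fun c : g × V => (c.1, c.2 + d₀ c.1)) a) =
        (fun c : h × W => (c.1, c.2 + δ₀ c.1)) (extHom φ ψ η a)) :=
  statement15_general φ ρV ρW ψ θ θ' γ γ' η η' d₀ δ₀ hd hδ he
end

section
/- Let (g,h,φ) be a morphism Lie algebra, (V,W,ψ) a representation, and (θ,γ,η) a 3-cocycle. Then setting l₂(x,v) = ρ_V(x)v on g ⊗ V, l₂'(k,w) = ρ_W(k)w on h ⊗ W, the data (V →0 g, l₂, θ) and (W →0 h, l₂', γ) together with Φ = (φ, ψ, η) form a skeletal 2-term morphism sh Lie algebra. -/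
attribute [local instance 100] LieRing.ofAssociativeRing

/-!
The only identity with content is the `φ₂`-coherence: the third cocycle equation at `(x, y, z)`
says `ψ θ - γ φ³ = δη`, and on an alternating 2-cochain the Chevalley–Eilenberg differential is the
cyclic sum `ρ(x) η(y, z) + c.p. + η(x, [y, z]) + c.p.`, by antisymmetry of `η` and of the bracket.
-/

theorem ceD_apply_three {L M : Type*} [AddCommGroup M] (br : L → L → L) (ρ : L → M → M)
    (f : (Fin 2 → L) → M) (x : Fin 3 → L) :
    ceD br ρ f x =
      ρ (x 0) (f ![x 1, x 2]) - ρ (x 1) (f ![x 0, x 2]) + ρ (x 2) (f ![x 0, x 1])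
        - f ![br (x 0) (x 1), x 2] + f ![br (x 0) (x 2), x 1] - f ![br (x 1) (x 2), x 0] := by
  have e1 : x ∘ Fin.succ = ![x 1, x 2] := by funext t; fin_cases t <;> rfl
  have e2 : x ∘ Fin.succAbove 1 = ![x 0, x 2] := by funext t; fin_cases t <;> rfl
  have e3 : x ∘ Fin.succAbove 2 = ![x 0, x 1] := by funext t; fin_cases t <;> rfl
  have e4 : (fun t => Fin.cons (α := fun _ => L) (br (x 0) (x 1))
      (fun s : Fin 1 => x s.succ.succ) t) = ![br (x 0) (x 1), x 2] := by
    funext t; fin_cases t <;> rfl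
  have e5 : (fun t => Fin.cons (α := fun _ => L) (br (x 0) (x 2))
      (fun s : Fin 1 => x (Fin.succAbove 2 s.succ)) t) = ![br (x 0) (x 2), x 1] := by
    funext t; fin_cases t <;> rfl
  have e6 : (fun t => Fin.cons (α := fun _ => L) (br (x 1) (x 2))
      (fun s : Fin 1 => x (Fin.succAbove 2 (Fin.succAbove 1 s))) t) = ![br (x 1) (x 2), x 0] := by
    funext t; fin_cases t <;> rfl
  simp only [ceD, Fin.sum_univ_succ, Fin.sum_univ_zero]
  norm_num
  rw [e1, e2, e3, e4, e5, e6]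
  abel

namespace AlternatingMap

variable {R M N : Type*} [CommRing R] [AddCommGroup M] [Module R M] [AddCommGroup N] [Module R N]

theorem map_vecCons_two_swap (f : M [⋀^Fin 2]→ₗ[R] N) (a b : M) : f ![a, b] = -f ![b, a] := by
  have e : ![b, a] ∘ Equiv.swap 0 1 = ![a, b] := by funext t; fin_cases t <;> rfl
  rw [← f.map_swap ![b, a] (i := 0) (j := 1) (by decide), e]

theorem map_vecCons_neg {n : ℕ} (f : M [⋀^Fin n.succ]→ₗ[R] N) (m : Fin n → M) (a : M) :
    f (Matrix.vecCons (-a) m) = -f (Matrix.vecCons a m) := by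
  simpa using f.map_vecCons_smul m (-1) a

end AlternatingMap

theorem LieHom.map_lie_apply {R L M : Type*} [CommRing R] [LieRing L] [LieAlgebra R L]
    [AddCommGroup M] [Module R M] (ρ : L →ₗ⁅R⁆ Module.End R M) (x y : L) (v : M) :
    ρ ⁅x, y⁆ v = ρ x (ρ y v) - ρ y (ρ x v) := by
  rw [LieHom.map_lie, Ring.lie_def]; rfl

theorem ceD_lie_apply_cyclic {R L M : Type*} [CommRing R] [LieRing L] [Module R L]
    [AddCommGroup M] [Module R M] (ρ : L → Module.End R M) (f : L [⋀^Fin 2]→ₗ[R] M) (x y z : L) :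
    ceD (fun a b : L => ⁅a, b⁆) (fun a w => ρ a w) (⇑f) ![x, y, z] =
      ρ x (f ![y, z]) + ρ y (f ![z, x]) + ρ z (f ![x, y])
        + f ![x, ⁅y, z⁆] + f ![y, ⁅z, x⁆] + f ![z, ⁅x, y⁆] := by
  rw [ceD_apply_three]
  simp only [Matrix.cons_val_zero, Matrix.cons_val_one, Matrix.cons_val_two, Matrix.tail_cons,
    Matrix.head_cons]
  rw [f.map_vecCons_two_swap x z, f.map_vecCons_two_swap ⁅x, y⁆ z, f.map_vecCons_two_swap ⁅y, z⁆ x,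
    ← lie_skew x z, f.map_vecCons_neg, f.map_vecCons_two_swap ⁅z, x⁆ y, map_neg]
  abel

/-- Let `(g,h,φ)` be a morphism Lie algebra, `(V,W,ψ)` a representation
and `(θ,γ,η)` a 3-cocycle of the morphism Lie algebra complex.  Then, setting
`l₂(x,v) = ρV(x)v` on `g ⊗ V` and `l₂'(z,w) = ρW(z)w` on `h ⊗ W`, the data
`(V →0 g, l₂, θ)` and `(W →0 h, l₂', γ)` together with `Φ = (φ, ψ, η)` form a skeletal
2-term morphism sh Lie algebra: the conclusions below are the skeletal sh Lie axioms
(Jacobi for the brackets, the action conditions, `θ` and `γ` are Chevalley–Eilenberg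
3-cocycles) and the homomorphism axioms (`φ` is a Lie algebra homomorphism, `ψ` is
equivariant, and the `φ₂`-coherence identity). -/
theorem statement17 {k g h V W : Type*} [CommRing k]
    [LieRing g] [LieAlgebra k g] [LieRing h] [LieAlgebra k h]
    [AddCommGroup V] [Module k V] [AddCommGroup W] [Module k W]
    (φ : g →ₗ⁅k⁆ h) (ρV : g →ₗ⁅k⁆ Module.End k V) (ρW : h →ₗ⁅k⁆ Module.End k W)
    (ψ : V →ₗ[k] W)
    (hψ : ∀ (x : g) (v : V), ψ (ρV x v) = ρW (φ x) (ψ v))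
    (θ : AlternatingMap k g V (Fin 3)) (γ : AlternatingMap k h W (Fin 3))
    (η : AlternatingMap k g W (Fin 2))
    -- the 3-cocycle conditions:
    (hθ : ceD (fun a b : g => ⁅a, b⁆) (fun x u => ρV x u) (⇑θ) = 0)
    (hγ : ceD (fun a b : h => ⁅a, b⁆) (fun z w => ρW z w) (⇑γ) = 0)
    (hη : (fun y : Fin 3 → g =>
        ψ (θ y) - γ (fun i => φ (y i))
          - ceD (fun a b : g => ⁅a, b⁆) (fun x w => ρW (φ x) w) (⇑η) y) = 0) :
    -- sh Lie axioms for (V →0 g, l₂, θ):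
    (∀ x y z : g, ⁅x, ⁅y, z⁆⁆ + ⁅y, ⁅z, x⁆⁆ + ⁅z, ⁅x, y⁆⁆ = 0) ∧
    (∀ (x y : g) (v : V), ρV ⁅x, y⁆ v = ρV x (ρV y v) - ρV y (ρV x v)) ∧
    ceD (fun a b : g => ⁅a, b⁆) (fun x u => ρV x u) (⇑θ) = 0 ∧
    -- sh Lie axioms for (W →0 h, l₂', γ):
    (∀ x y z : h, ⁅x, ⁅y, z⁆⁆ + ⁅y, ⁅z, x⁆⁆ + ⁅z, ⁅x, y⁆⁆ = 0) ∧
    (∀ (x y : h) (w : W), ρW ⁅x, y⁆ w = ρW x (ρW y w) - ρW y (ρW x w)) ∧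
    ceD (fun a b : h => ⁅a, b⁆) (fun z w => ρW z w) (⇑γ) = 0 ∧
    -- homomorphism axioms for Φ = (φ, ψ, η):
    (∀ x y : g, φ ⁅x, y⁆ = ⁅φ x, φ y⁆) ∧
    (∀ (x : g) (v : V), ψ (ρV x v) = ρW (φ x) (ψ v)) ∧
    (∀ x y z : g,
      ρW (φ x) (η ![y, z]) + ρW (φ y) (η ![z, x]) + ρW (φ z) (η ![x, y])
          + η ![x, ⁅y, z⁆] + η ![y, ⁅z, x⁆] + η ![z, ⁅x, y⁆]
        = ψ (θ ![x, y, z]) - γ ![φ x, φ y, φ z]) := by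
  refine ⟨lie_jacobi, ρV.map_lie_apply, hθ, lie_jacobi, ρW.map_lie_apply, hγ,
    φ.map_lie, hψ, fun x y z => ?_⟩
  have hφ : (fun i => φ (![x, y, z] i)) = ![φ x, φ y, φ z] := by
    funext i; fin_cases i <;> rfl
  have hxyz := congrFun hη ![x, y, z]
  rw [Pi.zero_apply, sub_eq_zero, hφ] at hxyz
  rw [hxyz]
  exact (ceD_lie_apply_cyclic (fun a => ρW (φ a)) η x y z).symm
end
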